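/- Let q ∈ (1,2) and let (c_i), (d_i) ∈ U_q'. Then (c_i) < (d_i) in the lexicographical order if and only if ((c_i))_q < ((d_i))_q. -/
import Mathlib


open Filter Topology

noncomputable section

/-- The value `Σ_{i≥0} d i / q^(i+1)` of a (0-indexed) digit sequence `d` in base `q`;
this corresponds to `((d_i)_{i≥1})_q` with `d_i = d (i-1)`. -/
def seqVal (q : ℝ) (d : ℕ → ℕ) : ℝ := ∑' i : ℕ, (d i : ℝ) / q ^ (i + 1)

/-- `d` is a `q`-expansion of `x` with digits in `{0,1}`. -/
def IsExpansion (q x : ℝ) (d : ℕ → ℕ) : Prop :=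
  (∀ i, d i ≤ 1) ∧ x = seqVal q d

/-- `x` has a unique `q`-expansion. -/
def HasUniqueExpansion (q x : ℝ) : Prop := ∃! d : ℕ → ℕ, IsExpansion q x d

/-- The set `U(x)` of univoque bases of `x`. -/
def UBases (x : ℝ) : Set ℝ := {q | 1 < q ∧ q < 2 ∧ HasUniqueExpansion q x}

/-- `q_s(x) = inf U(x)`. -/
def qs (x : ℝ) : ℝ := sInf (UBases x)

/-- The univoque set `U_q` of `x ∈ [0, 1/(q-1)]` with a unique `q`-expansion. -/
def Uset (q : ℝ) : Set ℝ :=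
  {x | x ∈ Set.Icc 0 (1 / (q - 1)) ∧ HasUniqueExpansion q x}

/-- The set `U_q'` of digit sequences which are the unique `q`-expansion of their value. -/
def USeq (q : ℝ) : Set (ℕ → ℕ) :=
  {d | (∀ i, d i ≤ 1) ∧ ∀ e : ℕ → ℕ, IsExpansion q (seqVal q d) e → e = d}

/-- The Thue–Morse sequence: `τ 0 = 0`, `τ (2n) = τ n`, `τ (2n+1) = 1 - τ n`. -/
def IsThueMorse (τ : ℕ → ℕ) : Prop :=
  τ 0 = 0 ∧ (∀ n, τ (2 * n) = τ n) ∧ ∀ n, τ (2 * n + 1) = 1 - τ n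

/-- `q` is the Komornik–Loreti constant: the base in `(1,2)` with `1 = Σ_{i≥1} τ_i q^{-i}`. -/
def IsKL (τ : ℕ → ℕ) (q : ℝ) : Prop :=
  1 < q ∧ q < 2 ∧ (1 : ℝ) = ∑' i : ℕ, (τ (i + 1) : ℝ) / q ^ (i + 1)

/-- `Q` is the sequence of bases `q_n`: `Q 0 = 1` and for `n ≥ 1`, `Q n` is the root in
`(1,2)` of `1 = Σ_{i=1}^{2^n} τ_i q^{-i}`. -/
def IsBaseSeq (τ : ℕ → ℕ) (Q : ℕ → ℝ) : Prop :=
  Q 0 = 1 ∧ ∀ n, 1 ≤ n → 1 < Q n ∧ Q n < 2 ∧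
    (1 : ℝ) = ∑ i ∈ Finset.range (2 ^ n), (τ (i + 1) : ℝ) / (Q n) ^ (i + 1)

/-- `D_n = ⋃_{q ∈ (q_{n-1}, q_n]} U_q`. -/
def D (Q : ℕ → ℝ) (n : ℕ) : Set ℝ := ⋃ q ∈ Set.Ioc (Q (n - 1)) (Q n), Uset q

/-- The golden ratio. -/
def qG : ℝ := (1 + Real.sqrt 5) / 2

/-- Strict lexicographical order on digit sequences. -/
def seqLt (c d : ℕ → ℕ) : Prop := ∃ n, (∀ i, i < n → c i = d i) ∧ c n < d n

/-- The word `τ_1 ⋯ τ_m`. -/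
def tmPrefix (τ : ℕ → ℕ) (m : ℕ) : List ℕ := (List.range m).map fun i => τ (i + 1)

/-- `w⁻`: decrease the last digit of a word by 1. -/
def lastDec (w : List ℕ) : List ℕ := w.dropLast ++ [w.getLastD 0 - 1]

/-- `w⁺`: increase the last digit of a word by 1. -/
def lastInc (w : List ℕ) : List ℕ := w.dropLast ++ [w.getLastD 0 + 1]

/-- The reflection of a word. -/
def reflect (w : List ℕ) : List ℕ := w.map fun d => 1 - d

/-- The infinite sequence given by the prefix `p` followed by periodic repetition of `w`. -/
def prefPeriodic (p w : List ℕ) : ℕ → ℕ := fun j =>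
  if j < p.length then p.getD j 0 else w.getD ((j - p.length) % w.length) 0

/-- `z_n = ((τ_1⋯τ_{2^{n-1}})(τ_{2^{n-1}+1}⋯τ_{2^n})^∞)_{q_n}`. -/
def zVal (τ : ℕ → ℕ) (Q : ℕ → ℝ) (n : ℕ) : ℝ :=
  seqVal (Q n) (prefPeriodic (tmPrefix τ (2 ^ (n - 1)))
    ((List.range (2 ^ (n - 1))).map fun i => τ (2 ^ (n - 1) + (i + 1))))

/-- `z_{1,k} = Σ_{i=1}^k q_G^{-i} + 1/(q_G^k (q_G^2 - 1))`. -/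
def z1 (k : ℕ) : ℝ :=
  (∑ i ∈ Finset.range k, 1 / qG ^ (i + 1)) + 1 / (qG ^ k * (qG ^ 2 - 1))

lemma summable_seqVal {q : ℝ} (hq : 1 < q) (d : ℕ → ℕ) (hd : ∀ i, d i ≤ 1) :
    Summable fun i : ℕ => (d i : ℝ) / q ^ (i + 1) := by
  have hq0 : (0:ℝ) < q := lt_trans one_pos hq
  have h1 : (1:ℝ)/q < 1 := by rw [div_lt_one hq0]; exact hq
  have hg : Summable fun i : ℕ => ((1:ℝ)/q) ^ (i+1) := by
    simpa [pow_succ] using (summable_geometric_of_lt_one (by positivity) h1).mul_right (1/q)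
  refine Summable.of_nonneg_of_le (fun i => by positivity) (fun i => ?_) hg
  rw [div_pow, one_pow]
  gcongr
  exact_mod_cast hd i

lemma seqVal_nonneg {q : ℝ} (hq : 1 < q) (d : ℕ → ℕ) : 0 ≤ seqVal q d := by
  have hq0 : (0:ℝ) < q := lt_trans one_pos hq
  exact tsum_nonneg (fun i => by positivity)

lemma tsum_geom_aux {q : ℝ} (hq : 1 < q) : ∑' i : ℕ, ((1:ℝ)/q) ^ (i+1) = 1/(q-1) := by
  have hq0 : (0:ℝ) < q := lt_trans one_pos hq
  have h1 : (1:ℝ)/q < 1 := by rw [div_lt_one hq0]; exact hq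
  have h0 : (0:ℝ) ≤ 1/q := by positivity
  have := tsum_geometric_of_lt_one h0 h1
  calc ∑' i : ℕ, ((1:ℝ)/q) ^ (i+1) = ∑' i : ℕ, (1/q) * ((1:ℝ)/q) ^ i := by
        refine tsum_congr fun i => ?_; ring
    _ = (1/q) * (1 - 1/q)⁻¹ := by rw [tsum_mul_left, this]
    _ = 1/(q-1) := by
        have h : 1 - 1/q = (q-1)/q := by field_simp
        rw [h, inv_div]
        rw [div_mul_div_comm]
        rw [one_mul, mul_comm]
        rw [mul_comm (q-1) q, ← div_div, div_self (by linarith : q ≠ 0)]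

lemma seqVal_le {q : ℝ} (hq : 1 < q) (d : ℕ → ℕ) (hd : ∀ i, d i ≤ 1) :
    seqVal q d ≤ 1/(q-1) := by
  have hq0 : (0:ℝ) < q := lt_trans one_pos hq
  rw [← tsum_geom_aux hq]
  have hg : Summable fun i : ℕ => ((1:ℝ)/q) ^ (i+1) := by
    have h1 : (1:ℝ)/q < 1 := by rw [div_lt_one hq0]; exact hq
    simpa [pow_succ] using (summable_geometric_of_lt_one (by positivity) h1).mul_right (1/q)
  refine Summable.tsum_le_tsum (fun i => ?_) (summable_seqVal hq d hd) hg
  rw [div_pow, one_pow]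
  gcongr
  exact_mod_cast hd i

lemma seqVal_split {q : ℝ} (hq : 1 < q) (d : ℕ → ℕ) (hd : ∀ i, d i ≤ 1) (m : ℕ) :
    seqVal q d = (∑ i ∈ Finset.range m, (d i : ℝ) / q ^ (i+1))
      + (1/q^m) * seqVal q (fun i => d (m + i)) := by
  have hq0 : (0:ℝ) < q := lt_trans one_pos hq
  have hs := summable_seqVal hq d hd
  rw [seqVal, ← Summable.sum_add_tsum_nat_add m hs]
  congr 1
  rw [seqVal, ← tsum_mul_left]
  refine tsum_congr fun i => ?_
  rw [add_comm i m]
  rw [show m + i + 1 = m + (i+1) by ring, pow_add]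
  field_simp

def gR (q y : ℝ) : ℕ → ℝ
  | 0 => y
  | n+1 => gR q y n - (if 1/q^(n+1) ≤ gR q y n then 1 else 0)/q^(n+1)

def gD (q y : ℝ) (n : ℕ) : ℕ := if 1/q^(n+1) ≤ gR q y n then 1 else 0

lemma gD_le_one (q y : ℝ) (n : ℕ) : gD q y n ≤ 1 := by
  unfold gD; split <;> simp

lemma gR_bounds {q y : ℝ} (hq1 : 1 < q) (hq2 : q < 2) (hy0 : 0 ≤ y)
    (hy1 : y ≤ 1/(q-1)) : ∀ n, 0 ≤ gR q y n ∧ gR q y n ≤ 1/(q^n*(q-1)) := by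
  have hq0 : (0:ℝ) < q := lt_trans one_pos hq1
  have hqm : (0:ℝ) < q - 1 := by linarith
  intro n
  induction n with
  | zero => exact ⟨hy0, by simpa [gR, one_div] using hy1⟩
  | succ n ih =>
    obtain ⟨h0, h1⟩ := ih
    have hpow : (0:ℝ) < q^(n+1) := by positivity
    by_cases h : 1/q^(n+1) ≤ gR q y n
    · constructor
      · simp only [gR, if_pos h]
        linarith
      · simp only [gR, if_pos h]
        have key : 1/(q^n*(q-1)) - 1/q^(n+1) = 1/(q^(n+1)*(q-1)) := by
          rw [div_sub_div _ _ (by positivity) (by positivity), div_eq_div_iff (by positivity) (by positivity)]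
          ring
        calc gR q y n - 1/q^(n+1) ≤ 1/(q^n*(q-1)) - 1/q^(n+1) := by linarith
          _ = 1/(q^(n+1)*(q-1)) := key
    · constructor
      · simp only [gR, if_neg h]
        simpa using h0
      · simp only [gR, if_neg h]
        push_neg at h
        have : (1:ℝ)/q^(n+1) ≤ 1/(q^(n+1)*(q-1)) := by
          rw [div_le_div_iff₀ (by positivity) (by positivity)]
          nlinarith
        rw [zero_div, sub_zero]
        calc gR q y n ≤ 1/q^(n+1) := le_of_lt h
          _ ≤ _ := this
        
lemma gR_sum (q y : ℝ) : ∀ n, (∑ i ∈ Finset.range n, (gD q y i : ℝ)/q^(i+1)) = y - gR q y n := by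
  intro n
  induction n with
  | zero => simp [gR]
  | succ n ih =>
    rw [Finset.sum_range_succ, ih]
    show _ = y - gR q y (n+1)
    simp only [gR, gD]
    split <;> simp <;> ring

lemma greedy_expansion {q y : ℝ} (hq1 : 1 < q) (hq2 : q < 2) (hy0 : 0 ≤ y)
    (hy1 : y ≤ 1/(q-1)) : seqVal q (gD q y) = y := by
  have hq0 : (0:ℝ) < q := lt_trans one_pos hq1
  have hqm : (0:ℝ) < q - 1 := by linarith
  have hs := summable_seqVal hq1 (gD q y) (gD_le_one q y)
  have hR0 : Tendsto (fun n => gR q y n) atTop (𝓝 0) := by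
    have hub : Tendsto (fun n : ℕ => (1/(q-1)) * (1/q)^n) atTop (𝓝 0) := by
      have : Tendsto (fun n : ℕ => ((1:ℝ)/q)^n) atTop (𝓝 0) :=
        tendsto_pow_atTop_nhds_zero_of_lt_one (by positivity) (by rw [div_lt_one hq0]; exact hq1)
      simpa using this.const_mul (1/(q-1))
    refine squeeze_zero (fun n => (gR_bounds hq1 hq2 hy0 hy1 n).1) (fun n => ?_) hub
    have := (gR_bounds hq1 hq2 hy0 hy1 n).2
    calc gR q y n ≤ 1/(q^n*(q-1)) := this
      _ = (1/(q-1)) * (1/q)^n := by rw [div_pow, one_pow]; field_simp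
  have h1 : Tendsto (fun n => ∑ i ∈ Finset.range n, (gD q y i : ℝ)/q^(i+1)) atTop (𝓝 y) := by
    have : Tendsto (fun n => y - gR q y n) atTop (𝓝 (y - 0)) := tendsto_const_nhds.sub hR0
    simpa [gR_sum q y] using this
  have h2 := hs.hasSum.tendsto_sum_nat
  exact tendsto_nhds_unique h2 h1


lemma USeq_val_lt_of_seqLt (q : ℝ) (hq1 : 1 < q) (hq2 : q < 2)
    (c d : ℕ → ℕ) (hc : c ∈ USeq q) (hd : d ∈ USeq q) (h : seqLt c d) :
    seqVal q c < seqVal q d := by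
  have hq0 : (0:ℝ) < q := lt_trans one_pos hq1
  obtain ⟨n, hpre, hlt⟩ := h
  have hcn : c n = 0 := by have h1 := hc.1 n; have h2 := hd.1 n; omega
  have hdn : d n = 1 := by have h1 := hc.1 n; have h2 := hd.1 n; omega
  by_contra hge
  push_neg at hge
  set m := n + 1 with hm
  have hcs := seqVal_split hq1 c hc.1 m
  have hds := seqVal_split hq1 d hd.1 m
  set Vc := seqVal q (fun i => c (m + i)) with hVc'
  set Vd := seqVal q (fun i => d (m + i)) with hVd'
  set Sc := ∑ i ∈ Finset.range m, (c i : ℝ)/q^(i+1) with hSc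
  have hsum : ∑ i ∈ Finset.range m, (d i : ℝ)/q^(i+1) = Sc + 1/q^m := by
    rw [hSc, hm, Finset.sum_range_succ, Finset.sum_range_succ, hcn, hdn]
    have heq : ∑ i ∈ Finset.range n, (d i:ℝ)/q^(i+1)
        = ∑ i ∈ Finset.range n, (c i:ℝ)/q^(i+1) :=
      Finset.sum_congr rfl (fun i hi => by rw [hpre i (Finset.mem_range.mp hi)])
    rw [heq]; push_cast; ring
  have ht : (0:ℝ) < 1/q^m := by positivity
  have key : 1 + Vd ≤ Vc := by
    rw [hcs, hds, hsum] at hge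
    have h2 : (1/q^m) * (1 + Vd) ≤ (1/q^m) * Vc := by
      rw [mul_add, mul_one]; linarith
    exact le_of_mul_le_mul_left h2 ht
  have hVd0 : 0 ≤ Vd := seqVal_nonneg hq1 _
  have hVcle : Vc ≤ 1/(q-1) := seqVal_le hq1 _ (fun i => hc.1 _)
  set y := 1 + Vd with hy
  have hy0 : 0 ≤ y := by rw [hy]; linarith
  have hy1 : y ≤ 1/(q-1) := le_trans key hVcle
  set g := gD q y with hg
  have hgval : seqVal q g = y := greedy_expansion hq1 hq2 hy0 hy1
  set e : ℕ → ℕ := fun i => if i < n then d i else if i = n then 0 else g (i - m)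
    with he
  have he_le : ∀ i, e i ≤ 1 := by
    intro i
    simp only [he]
    split
    · exact hd.1 i
    · split
      · omega
      · exact gD_le_one q y _
  have hes := seqVal_split hq1 e he_le m
  have htail : (fun i => e (m + i)) = g := by
    funext i
    simp only [he]
    rw [if_neg (by omega), if_neg (by omega)]
    congr 1
    omega
  have hpref : ∑ i ∈ Finset.range m, (e i : ℝ)/q^(i+1) = Sc := by
    rw [hSc, hm, Finset.sum_range_succ, Finset.sum_range_succ]
    congr 1
    · refine Finset.sum_congr rfl fun i hi => ?_
      have hi' : i < n := Finset.mem_range.mp hi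
      simp only [he]
      rw [if_pos hi', hpre i hi']
    · simp [he, hcn]
  have heval : seqVal q e = seqVal q d := by
    rw [hes, htail, hgval, hds, hsum, hpref, hy]
    ring
  have hed : e = d := hd.2 e ⟨he_le, heval.symm⟩
  have h0 : e n = 0 := by simp [he]
  rw [hed] at h0
  omega

/-- For `q ∈ (1,2)` and `(c_i), (d_i) ∈ U_q'`, `(c_i) < (d_i)`
lexicographically iff `((c_i))_q < ((d_i))_q`. -/
theorem USeq_lt_iff (q : ℝ) (hq1 : 1 < q) (hq2 : q < 2)
    (c d : ℕ → ℕ) (hc : c ∈ USeq q) (hd : d ∈ USeq q) :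
    seqLt c d ↔ seqVal q c < seqVal q d := by
  constructor
  · exact USeq_val_lt_of_seqLt q hq1 hq2 c d hc hd
  · intro h
    by_contra hnd
    have hne : c ≠ d := by rintro rfl; exact lt_irrefl _ h
    have hex : ∃ n, c n ≠ d n := Function.ne_iff.mp hne
    classical
    have hn := Nat.find_spec hex
    have hmin : ∀ i, i < Nat.find hex → c i = d i := fun i hi => by
      by_contra hcon
      exact Nat.find_min hex hi hcon
    rcases lt_or_gt_of_ne hn with h1 | h1
    · exact hnd ⟨Nat.find hex, hmin, h1⟩
    · have hdc : seqLt d c := ⟨Nat.find hex, fun i hi => (hmin i hi).symm, h1⟩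
      have := USeq_val_lt_of_seqLt q hq1 hq2 d c hd hc hdc
      linarith
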